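/- Per-episode regret of the optimistic policy: suppose the true kernel P satisfies ‖P(·|s,a) − P̂(·|s,a)‖₁ ≤ d for all (s,a) ∈ S × A, and let P̃ ∈ M(P̂,d) (with constant width d) and policy π̃ be optimistic outputs of extended value iteration, i.e., V^{P̃,π̃}_h(s) = Ṽ_h(s) for all h, s. Then for every state s ∈ S, V*_1(s) − V^{P,π̃}_1(s) ≤ Ṽ_1(s) − V^{P,π̃}_1(s) ≤ (d/2) · H · (H − 1), where V* is the optimal value function of the true MDP (S, A, H, P, r). -/

import Mathlib

/-- Value of policy `π` in the finite-horizon MDP `(S, A, H, P, r)` with `j` steps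
remaining; the value `V^π_h` at step `h ∈ {1,…,H+1}` is `polVal H P r π (H + 1 - h)`. -/
noncomputable def polVal {S A : Type*} [Fintype S] (H : ℕ) (P : S → A → S → ℝ)
    (r : S → A → ℝ) (π : S → ℕ → A) : ℕ → S → ℝ
  | 0, _ => 0
  | j + 1, s =>
      r s (π s (H - j)) + ∑ s' : S, P s (π s (H - j)) s' * polVal H P r π j s'

/-- `Vpi H P r π h s = V^π_h(s)`, the value function of policy `π`, defined by backward
induction: `V^π_{H+1}(s) = 0` and `V^π_h(s) = r(s,π(s,h)) + ∑_{s'} P(s'|s,π(s,h)) V^π_{h+1}(s')`. -/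
noncomputable def Vpi {S A : Type*} [Fintype S] (H : ℕ) (P : S → A → S → ℝ)
    (r : S → A → ℝ) (π : S → ℕ → A) (h : ℕ) (s : S) : ℝ :=
  polVal H P r π (H + 1 - h) s

/-- Optimal value function `V*_h(s) = sup_π V^π_h(s)`. -/
noncomputable def Vstar {S A : Type*} [Fintype S] (H : ℕ) (P : S → A → S → ℝ)
    (r : S → A → ℝ) (h : ℕ) (s : S) : ℝ :=
  ⨆ π : S → ℕ → A, Vpi H P r π h s

/-- `q` is a probability vector on the finite set `S`. -/
def IsProbVec {S : Type*} [Fintype S] (q : S → ℝ) : Prop :=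
  (∀ s, 0 ≤ q s) ∧ ∑ s : S, q s = 1

/-- `P'` belongs to the plausible kernel set `M(P̂, d)`: every row `P'(·|s,a)` is a
probability vector within `ℓ¹`-distance `d(s,a)` of the empirical row `P̂(·|s,a)`. -/
def IsPlausible {S A : Type*} [Fintype S] (Phat : S → A → S → ℝ) (d : S → A → ℝ)
    (P' : S → A → S → ℝ) : Prop :=
  ∀ s a, IsProbVec (P' s a) ∧ ∑ s' : S, |P' s a s' - Phat s a s'| ≤ d s a

/-- Inner maximization of extended value iteration:
`max { ∑_{s'} q(s') W(s') : q ∈ Δ(S), ‖q − p̂‖₁ ≤ d }`. -/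
noncomputable def innerOpt {S : Type*} [Fintype S] (phat : S → ℝ) (d : ℝ)
    (W : S → ℝ) : ℝ :=
  sSup { x : ℝ | ∃ q : S → ℝ, IsProbVec q ∧ (∑ s : S, |q s - phat s| ≤ d) ∧
    x = ∑ s : S, q s * W s }

/-- Optimistic value of extended value iteration with `j` steps remaining;
the optimistic value `Ṽ_h` at step `h ∈ {1,…,H+1}` is `optVal H Phat d r (H + 1 - h)`. -/
noncomputable def optVal {S A : Type*} [Fintype S] [Fintype A] (H : ℕ)
    (Phat : S → A → S → ℝ) (d : S → A → ℝ) (r : S → A → ℝ) : ℕ → S → ℝ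
  | 0, _ => 0
  | j + 1, s =>
      ⨆ a : A, (r s a + innerOpt (Phat s a) (d s a) (optVal H Phat d r j))

/-- `Vtilde H Phat d r h s = Ṽ_h(s)`, the optimistic value function of finite-horizon
extended value iteration: `Ṽ_{H+1}(s) = 0` and
`Ṽ_h(s) = max_{a} [ r(s,a) + max { ∑_{s'} q(s') Ṽ_{h+1}(s') : q ∈ Δ(S), ‖q − P̂(·|s,a)‖₁ ≤ d(s,a) } ]`. -/
noncomputable def Vtilde {S A : Type*} [Fintype S] [Fintype A] (H : ℕ)
    (Phat : S → A → S → ℝ) (d : S → A → ℝ) (r : S → A → ℝ) (h : ℕ) (s : S) : ℝ :=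
  optVal H Phat d r (H + 1 - h) s

/-!
The optimistic value dominates every policy's value under the true kernel, because the true
kernel is one of the plausible ones over which extended value iteration maximizes; this gives
`V* ≤ Ṽ`. For the second inequality, `Ṽ` is the value of `π̃` under `P̃`, and `P̃` and `P`
are both within `ℓ¹`-distance `d` of `P̂`, hence within `2d` of each other. Values with `j`
steps remaining lie in `[0, j]`, so one step of backward induction changes the gap between
the two values by at most `(2d / 2) · j`; summing over `j < H` gives `d · H (H − 1) / 2`.
-/

open Finset

section ProbVec

variable {S : Type*} [Fintype S]

theorem IsProbVec.sum_mul_le {q : S → ℝ} (hq : IsProbVec q) {W : S → ℝ} {c : ℝ}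
    (hW : ∀ s, W s ≤ c) : ∑ s, q s * W s ≤ c :=
  calc ∑ s, q s * W s ≤ ∑ s, q s * c :=
        sum_le_sum fun s _ => mul_le_mul_of_nonneg_left (hW s) (hq.1 s)
    _ = c := by rw [← sum_mul, hq.2, one_mul]

theorem IsProbVec.sum_mul_nonneg {q : S → ℝ} (hq : IsProbVec q) {W : S → ℝ}
    (hW : ∀ s, 0 ≤ W s) : 0 ≤ ∑ s, q s * W s :=
  sum_nonneg fun s _ => mul_nonneg (hq.1 s) (hW s)

theorem le_innerOpt {phat q : S → ℝ} {d : ℝ} (W : S → ℝ) (hq : IsProbVec q)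
    (hqd : ∑ s, |q s - phat s| ≤ d) : ∑ s, q s * W s ≤ innerOpt phat d W := by
  refine le_csSup ⟨∑ s, |W s|, ?_⟩ ⟨q, hq, hqd, rfl⟩
  rintro x ⟨p, hp, -, rfl⟩
  exact hp.sum_mul_le fun s => (le_abs_self _).trans <|
    single_le_sum (f := fun s => |W s|) (fun _ _ => abs_nonneg _) (mem_univ s)

theorem sum_abs_sub_le_add (x y z : S → ℝ) :
    ∑ s, |x s - y s| ≤ ∑ s, |x s - z s| + ∑ s, |y s - z s| := by
  rw [← sum_add_distrib]
  exact sum_le_sum fun s _ => (abs_sub_le _ (z s) _).trans_eq (by rw [abs_sub_comm (z s)])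

theorem sum_mul_sub_sum_mul_le {q p W : S → ℝ} {lo hi : ℝ} (hqp : ∑ s, q s = ∑ s, p s)
    (hW : ∀ s, W s ∈ Set.Icc lo hi) :
    ∑ s, q s * W s - ∑ s, p s * W s ≤ (∑ s, |q s - p s|) / 2 * (hi - lo) := by
  set m := (lo + hi) / 2 with hm
  -- the mass condition lets us recentre `W` at the midpoint `m` of `[lo, hi]`
  have hcentre : ∑ s, q s * W s - ∑ s, p s * W s = ∑ s, (q s - p s) * (W s - m) := by
    simp only [sub_mul, mul_sub, sum_sub_distrib, ← sum_mul, hqp]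
    ring
  rw [hcentre, div_mul_eq_mul_div, mul_div_assoc, sum_mul]
  refine sum_le_sum fun s _ => ?_
  have hWm : |W s - m| ≤ (hi - lo) / 2 := by
    rw [abs_le]; constructor <;> linarith [(hW s).1, (hW s).2]
  calc (q s - p s) * (W s - m) ≤ |q s - p s| * |W s - m| := by
        rw [← abs_mul]; exact le_abs_self _
    _ ≤ |q s - p s| * ((hi - lo) / 2) := by gcongr

end ProbVec

section PolicyValue

variable {S A : Type*} [Fintype S] {H : ℕ} {P : S → A → S → ℝ} {r : S → A → ℝ}

theorem polVal_mem_Icc (hP : ∀ s a, IsProbVec (P s a))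
    (hr : ∀ s a, r s a ∈ Set.Icc (0 : ℝ) 1) (π : S → ℕ → A) (j : ℕ) (s : S) :
    polVal H P r π j s ∈ Set.Icc (0 : ℝ) j := by
  induction j generalizing s with
  | zero => simp [polVal]
  | succ j ih =>
    obtain ⟨hr0, hr1⟩ := hr s (π s (H - j))
    have hlo := (hP s (π s (H - j))).sum_mul_nonneg fun s' => (ih s').1
    have hhi := (hP s (π s (H - j))).sum_mul_le fun s' => (ih s').2
    simp only [polVal, Set.mem_Icc, Nat.cast_succ]
    constructor <;> linarith

theorem polVal_le_optVal [Fintype A] {Phat : S → A → S → ℝ} {d : S → A → ℝ}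
    (hP : ∀ s a, IsProbVec (P s a)) (hin : ∀ s a, ∑ s', |P s a s' - Phat s a s'| ≤ d s a)
    (π : S → ℕ → A) (j : ℕ) (s : S) : polVal H P r π j s ≤ optVal H Phat d r j s := by
  induction j generalizing s with
  | zero => simp [polVal, optVal]
  | succ j ih =>
    set a := π s (H - j)
    calc polVal H P r π (j + 1) s = r s a + ∑ s', P s a s' * polVal H P r π j s' := rfl
      _ ≤ r s a + ∑ s', P s a s' * optVal H Phat d r j s' := by
          gcongr with s'
          exacts [(hP s a).1 s', ih s']
      _ ≤ r s a + innerOpt (Phat s a) (d s a) (optVal H Phat d r j) := by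
          gcongr; exact le_innerOpt _ (hP s a) (hin s a)
      _ ≤ optVal H Phat d r (j + 1) s :=
          le_ciSup (f := fun a => r s a + innerOpt (Phat s a) (d s a) (optVal H Phat d r j))
            (Set.finite_range _).bddAbove a

theorem Vstar_le_Vtilde [Fintype A] [Nonempty A] {Phat : S → A → S → ℝ}
    {d : S → A → ℝ} (hP : ∀ s a, IsProbVec (P s a))
    (hin : ∀ s a, ∑ s', |P s a s' - Phat s a s'| ≤ d s a) (h : ℕ) (s : S) :
    Vstar H P r h s ≤ Vtilde H Phat d r h s :=
  ciSup_le fun π => polVal_le_optVal hP hin π _ s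

theorem polVal_sub_polVal_le {P' : S → A → S → ℝ} {ε : ℝ}
    (hP' : ∀ s a, IsProbVec (P' s a)) (hP : ∀ s a, IsProbVec (P s a))
    (hdist : ∀ s a, ∑ s', |P' s a s' - P s a s'| ≤ ε)
    (hr : ∀ s a, r s a ∈ Set.Icc (0 : ℝ) 1) (π : S → ℕ → A) (j : ℕ) (s : S) :
    polVal H P' r π j s - polVal H P r π j s ≤ ε * j * (j - 1) / 4 := by
  induction j generalizing s with
  | zero => simp [polVal]
  | succ j ih =>
    set a := π s (H - j)
    set W' := polVal H P' r π j
    set W := polVal H P r π j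
    have hkernel : ∑ s', P' s a s' * W' s' - ∑ s', P s a s' * W' s' ≤ ε / 2 * j := by
      calc _ ≤ (∑ s', |P' s a s' - P s a s'|) / 2 * (j - 0) :=
            sum_mul_sub_sum_mul_le (by rw [(hP' s a).2, (hP s a).2])
              (polVal_mem_Icc hP' hr π j)
        _ ≤ ε / 2 * j := by rw [sub_zero]; gcongr; exact hdist s a
    have hvalue :
        ∑ s', P s a s' * W' s' - ∑ s', P s a s' * W s' ≤ ε * j * (j - 1) / 4 := by
      rw [← sum_sub_distrib]
      simp_rw [← mul_sub]
      exact (hP s a).sum_mul_le ih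
    simp only [polVal, Nat.cast_succ]
    linarith

end PolicyValue

theorem per_episode_regret_of_optimistic_policy_general {S A : Type*}
    [Fintype S] [Fintype A]
    (H : ℕ)
    (P : S → A → S → ℝ) (hP : ∀ s a, IsProbVec (P s a))
    (Phat : S → A → S → ℝ)
    (d : ℝ)
    (hin : ∀ s a, ∑ s' : S, |P s a s' - Phat s a s'| ≤ d)
    (r : S → A → ℝ) (hr : ∀ s a, r s a ∈ Set.Icc (0 : ℝ) 1)
    (Ptilde : S → A → S → ℝ) (πtilde : S → ℕ → A)
    (hPt : IsPlausible Phat (fun _ _ => d) Ptilde)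
    (hopt : ∀ h ∈ Finset.Icc 1 (H + 1), ∀ s : S,
      Vpi H Ptilde r πtilde h s = Vtilde H Phat (fun _ _ => d) r h s) :
    ∀ s : S,
      Vstar H P r 1 s - Vpi H P r πtilde 1 s
          ≤ Vtilde H Phat (fun _ _ => d) r 1 s - Vpi H P r πtilde 1 s ∧
        Vtilde H Phat (fun _ _ => d) r 1 s - Vpi H P r πtilde 1 s
          ≤ d / 2 * (H : ℝ) * ((H : ℝ) - 1) := by
  intro s
  have : Nonempty A := ⟨πtilde s 0⟩
  have hstar := Vstar_le_Vtilde (H := H) (r := r) hP hin 1 s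
  have hdist : ∀ s a, ∑ s', |Ptilde s a s' - P s a s'| ≤ 2 * d := fun s a =>
    (sum_abs_sub_le_add _ _ (Phat s a)).trans (by linarith [(hPt s a).2, hin s a])
  have hgap := polVal_sub_polVal_le (H := H) (fun s a => (hPt s a).1) hP hdist hr πtilde H s
  refine ⟨by linarith, ?_⟩
  rw [← hopt 1 (by simp) s]
  simp only [Vpi, Nat.add_sub_cancel] at hgap ⊢
  linarith

/-- **Per-episode regret of the optimistic policy.** Suppose the true kernel `P`
satisfies `‖P(·|s,a) − P̂(·|s,a)‖₁ ≤ d` for all `(s,a)` (constant width `d`), and let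
`P̃ ∈ M(P̂,d)` and policy `π̃` be optimistic outputs of extended value iteration, i.e.
`V^{P̃,π̃}_h(s) = Ṽ_h(s)` for all `h ∈ {1,…,H+1}` and `s`. Then for every state `s`,
`V*_1(s) − V^{P,π̃}_1(s) ≤ Ṽ_1(s) − V^{P,π̃}_1(s) ≤ (d/2) · H · (H − 1)`. -/
theorem per_episode_regret_of_optimistic_policy {S A : Type*}
    [Fintype S] [Nonempty S] [Fintype A] [Nonempty A]
    (H : ℕ) (hH : 1 ≤ H)
    (P : S → A → S → ℝ) (hP : ∀ s a, IsProbVec (P s a))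
    (Phat : S → A → S → ℝ) (hPhat : ∀ s a, IsProbVec (Phat s a))
    (d : ℝ) (hd : 0 ≤ d)
    (hin : ∀ s a, ∑ s' : S, |P s a s' - Phat s a s'| ≤ d)
    (r : S → A → ℝ) (hr : ∀ s a, r s a ∈ Set.Icc (0 : ℝ) 1)
    (Ptilde : S → A → S → ℝ) (πtilde : S → ℕ → A)
    (hPt : IsPlausible Phat (fun _ _ => d) Ptilde)
    (hopt : ∀ h ∈ Finset.Icc 1 (H + 1), ∀ s : S,
      Vpi H Ptilde r πtilde h s = Vtilde H Phat (fun _ _ => d) r h s) :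
    ∀ s : S,
      Vstar H P r 1 s - Vpi H P r πtilde 1 s
          ≤ Vtilde H Phat (fun _ _ => d) r 1 s - Vpi H P r πtilde 1 s ∧
        Vtilde H Phat (fun _ _ => d) r 1 s - Vpi H P r πtilde 1 s
          ≤ d / 2 * (H : ℝ) * ((H : ℝ) - 1) :=
  per_episode_regret_of_optimistic_policy_general H P hP Phat d hin r hr Ptilde πtilde hPt hopt
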